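/- Weakening for simulation: for all contexts Γ, Γ', Δ, it holds that (Γ;Δ) ≼_s ((Γ,Γ');Δ), i.e., enlarging the unrestricted context moves a state up in the simulation preorder. -/

import Mathlib

/-- Formulas of the linear-logic fragment: atoms, 1, ⊗, ⊤, &, atomic-antecedent ⊸, !. -/
inductive Formula : Type where
  | atom : ℕ → Formula
  | one : Formula
  | tensor : Formula → Formula → Formula
  | top : Formula
  | with_ : Formula → Formula → Formula
  | limp : ℕ → Formula → Formula
  | bang : Formula → Formula
deriving DecidableEq

/-- Contexts are finite multisets of formulas. -/
abbrev Ctx : Type := Multiset Formula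

/-- A process state (Γ;Δ): unrestricted context Γ and linear context Δ. -/
abbrev State : Type := Ctx × Ctx

/-- Composition of states: ((Γ1;Δ1),(Γ2;Δ2)) = (Γ1,Γ2; Δ1,Δ2). -/
def State.comp (s t : State) : State := (s.1 + t.1, s.2 + t.2)

/-- DILL derivability Γ;Δ ⊢ A. -/
inductive Derives : Ctx → Ctx → Formula → Prop where
  | init (Γ : Ctx) (a : ℕ) : Derives Γ {Formula.atom a} (Formula.atom a)
  | clone {Γ Δ : Ctx} {A C : Formula} :
      Derives (A ::ₘ Γ) (A ::ₘ Δ) C → Derives (A ::ₘ Γ) Δ C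
  | tensorR {Γ Δ₁ Δ₂ : Ctx} {A B : Formula} :
      Derives Γ Δ₁ A → Derives Γ Δ₂ B → Derives Γ (Δ₁ + Δ₂) (Formula.tensor A B)
  | tensorL {Γ Δ : Ctx} {A B C : Formula} :
      Derives Γ (A ::ₘ B ::ₘ Δ) C → Derives Γ (Formula.tensor A B ::ₘ Δ) C
  | oneR (Γ : Ctx) : Derives Γ 0 Formula.one
  | oneL {Γ Δ : Ctx} {C : Formula} :
      Derives Γ Δ C → Derives Γ (Formula.one ::ₘ Δ) C
  | withR {Γ Δ : Ctx} {A B : Formula} :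
      Derives Γ Δ A → Derives Γ Δ B → Derives Γ Δ (Formula.with_ A B)
  | withL₁ {Γ Δ : Ctx} {A₁ A₂ C : Formula} :
      Derives Γ (A₁ ::ₘ Δ) C → Derives Γ (Formula.with_ A₁ A₂ ::ₘ Δ) C
  | withL₂ {Γ Δ : Ctx} {A₁ A₂ C : Formula} :
      Derives Γ (A₂ ::ₘ Δ) C → Derives Γ (Formula.with_ A₁ A₂ ::ₘ Δ) C
  | topR (Γ Δ : Ctx) : Derives Γ Δ Formula.top
  | limpR {Γ Δ : Ctx} {a : ℕ} {B : Formula} :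
      Derives Γ (Formula.atom a ::ₘ Δ) B → Derives Γ Δ (Formula.limp a B)
  | limpL {Γ Δ₁ Δ₂ : Ctx} {a : ℕ} {B C : Formula} :
      Derives Γ Δ₁ (Formula.atom a) → Derives Γ (B ::ₘ Δ₂) C →
      Derives Γ (Formula.limp a B ::ₘ (Δ₁ + Δ₂)) C
  | bangR {Γ : Ctx} {A : Formula} :
      Derives Γ 0 A → Derives Γ 0 (Formula.bang A)
  | bangL {Γ Δ : Ctx} {A C : Formula} :
      Derives (A ::ₘ Γ) Δ C → Derives Γ (Formula.bang A ::ₘ Δ) C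

/-- The logical preorder (Γ1;Δ1) ≼ₗ (Γ2;Δ2). -/
def LogicalPre (s t : State) : Prop :=
  ∀ (Γ' Δ' : Ctx) (C : Formula),
    Derives (Γ' + s.1) (Δ' + s.2) C → Derives (Γ' + t.1) (Δ' + t.2) C

/-- The reduction relation ⇝ on process states. -/
inductive Red : State → State → Prop where
  | tensor (Γ Δ : Ctx) (A B : Formula) :
      Red (Γ, Formula.tensor A B ::ₘ Δ) (Γ, A ::ₘ B ::ₘ Δ)
  | one (Γ Δ : Ctx) :
      Red (Γ, Formula.one ::ₘ Δ) (Γ, Δ)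
  | with₁ (Γ Δ : Ctx) (A₁ A₂ : Formula) :
      Red (Γ, Formula.with_ A₁ A₂ ::ₘ Δ) (Γ, A₁ ::ₘ Δ)
  | with₂ (Γ Δ : Ctx) (A₁ A₂ : Formula) :
      Red (Γ, Formula.with_ A₁ A₂ ::ₘ Δ) (Γ, A₂ ::ₘ Δ)
  | comm (Γ Δ : Ctx) (a : ℕ) (B : Formula) :
      Red (Γ, Formula.atom a ::ₘ Formula.limp a B ::ₘ Δ) (Γ, B ::ₘ Δ)
  | bang (Γ Δ : Ctx) (A : Formula) :
      Red (Γ, Formula.bang A ::ₘ Δ) (A ::ₘ Γ, Δ)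
  | clone (Γ Δ : Ctx) (A : Formula) :
      Red (A ::ₘ Γ, Δ) (A ::ₘ Γ, A ::ₘ Δ)

/-- ⇝*, the reflexive-transitive closure of reduction. -/
def RedStar : State → State → Prop := Relation.ReflTransGen Red

/-- Labels of the LTS: τ, send !a, receive ?a. -/
inductive Label : Type where
  | tau : Label
  | send : ℕ → Label
  | recv : ℕ → Label
deriving DecidableEq

/-- The labeled transition system on states. -/
inductive Step : State → Label → State → Prop where
  | send (Γ Δ : Ctx) (a : ℕ) :
      Step (Γ, Formula.atom a ::ₘ Δ) (Label.send a) (Γ, Δ)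
  | recv (Γ Δ : Ctx) (a : ℕ) (B : Formula) :
      Step (Γ, Formula.limp a B ::ₘ Δ) (Label.recv a) (Γ, B ::ₘ Δ)
  | comm {s₁ s₁' s₂ s₂' : State} {a : ℕ} :
      Step s₁ (Label.send a) s₁' → Step s₂ (Label.recv a) s₂' →
      Step (State.comp s₁ s₂) Label.tau (State.comp s₁' s₂')
  | tensor (Γ Δ : Ctx) (A B : Formula) :
      Step (Γ, Formula.tensor A B ::ₘ Δ) Label.tau (Γ, A ::ₘ B ::ₘ Δ)
  | one (Γ Δ : Ctx) :
      Step (Γ, Formula.one ::ₘ Δ) Label.tau (Γ, Δ)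
  | with₁ (Γ Δ : Ctx) (A₁ A₂ : Formula) :
      Step (Γ, Formula.with_ A₁ A₂ ::ₘ Δ) Label.tau (Γ, A₁ ::ₘ Δ)
  | with₂ (Γ Δ : Ctx) (A₁ A₂ : Formula) :
      Step (Γ, Formula.with_ A₁ A₂ ::ₘ Δ) Label.tau (Γ, A₂ ::ₘ Δ)
  | bang (Γ Δ : Ctx) (A : Formula) :
      Step (Γ, Formula.bang A ::ₘ Δ) Label.tau (A ::ₘ Γ, Δ)
  | clone (Γ Δ : Ctx) (A : Formula) :
      Step (A ::ₘ Γ, Δ) Label.tau (A ::ₘ Γ, A ::ₘ Δ)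

/-- ⇒τ, the reflexive-transitive closure of —τ→. -/
def WeakTau : State → State → Prop :=
  Relation.ReflTransGen (fun s t => Step s Label.tau t)

/-- Weak transition ⇒β: for β = τ it is ⇒τ, otherwise ⇒τ—β→⇒τ. -/
def WeakStep (s : State) (β : Label) (t : State) : Prop :=
  match β with
  | Label.tau => WeakTau s t
  | _ => ∃ u v, WeakTau s u ∧ Step u β v ∧ WeakTau v t

/-- A label is a "non-receive" label α (i.e., τ or a send). -/
def Label.isNonRecv : Label → Prop
  | Label.recv _ => False
  | _ => True

/-- A relation on states is a simulation. -/
def IsSimulation (R : State → State → Prop) : Prop :=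
  ∀ s t, R s t →
    (s.2 = 0 → ∃ Γ₂' : Ctx, WeakTau t (Γ₂', 0) ∧ R (s.1, 0) (Γ₂', 0)) ∧
    (∀ s₁ s₂ : State, s = State.comp s₁ s₂ →
      ∃ t₁ t₂ : State, WeakTau t (State.comp t₁ t₂) ∧ R s₁ t₁ ∧ R s₂ t₂) ∧
    (∀ (α : Label) (s' : State), α.isNonRecv → Step s α s' →
      ∃ t', WeakStep t α t' ∧ R s' t') ∧
    (∀ (a : ℕ) (s' : State), Step s (Label.recv a) s' →
      ∃ t', WeakTau (t.1, Formula.atom a ::ₘ t.2) t' ∧ R s' t')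

/-- The simulation preorder ≼ₛ. -/
def SimPre (s t : State) : Prop :=
  ∃ R : State → State → Prop, IsSimulation R ∧ R s t

/-- Strong barb: (Γ;Δ)↓a. -/
def Barb (s : State) (a : ℕ) : Prop := Formula.atom a ∈ s.2

/-- Weak barb: (Γ;Δ)⇓a. -/
def WeakBarb (s : State) (a : ℕ) : Prop := ∃ t, RedStar s t ∧ Barb t a

def BarbPreserving (R : State → State → Prop) : Prop :=
  ∀ s t a, R s t → Barb s a → WeakBarb t a

def ReductionClosed (R : State → State → Prop) : Prop :=
  ∀ s t s', R s t → Red s s' → ∃ t', RedStar t t' ∧ R s' t'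

def Compositional (R : State → State → Prop) : Prop :=
  ∀ s t u, R s t → R (State.comp s u) (State.comp t u)

def PartitionPreserving (R : State → State → Prop) : Prop :=
  ∀ s t, R s t →
    (s.2 = 0 → ∃ Γ₂' : Ctx, RedStar t (Γ₂', 0) ∧ R (s.1, 0) (Γ₂', 0)) ∧
    (∀ s₁ s₂ : State, s = State.comp s₁ s₂ →
      ∃ t₁ t₂ : State, RedStar t (State.comp t₁ t₂) ∧ R s₁ t₁ ∧ R s₂ t₂)

/-- The contextual preorder ≼_c: the largest barb-preserving, reduction-closed,
compositional, partition-preserving relation on states. -/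
def CtxPre (s t : State) : Prop :=
  ∃ R : State → State → Prop,
    BarbPreserving R ∧ ReductionClosed R ∧ Compositional R ∧ PartitionPreserving R ∧ R s t

/-- ⊗Δ: the ⊗-conjunction of all formulas in Δ (1 if Δ is empty). -/
noncomputable def bigTensor (Δ : Ctx) : Formula :=
  Δ.toList.foldr Formula.tensor Formula.one

/-- !Γ: prefix every formula of Γ with !. -/
def bangCtx (Γ : Ctx) : Ctx := Γ.map Formula.bang


/-! Enlarging the unrestricted context never removes a transition: every step of `(Γ;Δ)` is
matched, with the same label, by `(Γ,Γ';Δ)`, and the extra formulas are never forced to move.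
So "same linear context, larger unrestricted context" is itself a simulation. -/

def State.weaken (E : Ctx) (s : State) : State := (s.1 + E, s.2)

theorem State.weaken_comp (E : Ctx) (s₁ s₂ : State) :
    (s₁.comp s₂).weaken E = (s₁.weaken E).comp s₂ := by
  simp only [State.weaken, State.comp, add_right_comm]

theorem Step.weaken {s s' : State} {l : Label} (h : Step s l s') (E : Ctx) :
    Step (s.weaken E) l (s'.weaken E) := by
  induction h with
  | send Γ Δ a => exact Step.send (Γ + E) Δ a
  | recv Γ Δ a B => exact Step.recv (Γ + E) Δ a B
  | comm _ h₂ ih₁ _ =>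
    rw [State.weaken_comp, State.weaken_comp]
    exact Step.comm ih₁ h₂
  | tensor Γ Δ A B => exact Step.tensor (Γ + E) Δ A B
  | one Γ Δ => exact Step.one (Γ + E) Δ
  | with₁ Γ Δ A₁ A₂ => exact Step.with₁ (Γ + E) Δ A₁ A₂
  | with₂ Γ Δ A₁ A₂ => exact Step.with₂ (Γ + E) Δ A₁ A₂
  | bang Γ Δ A => simpa only [State.weaken, Multiset.cons_add] using Step.bang (Γ + E) Δ A
  | clone Γ Δ A => simpa only [State.weaken, Multiset.cons_add] using Step.clone (Γ + E) Δ A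

theorem Step.tau_of_recv {s s' : State} {a : ℕ} (h : Step s (Label.recv a) s') :
    Step (s.1, Formula.atom a ::ₘ s.2) Label.tau s' := by
  cases h with
  | recv Γ Δ a B =>
    simpa only [State.comp, add_zero, zero_add, Multiset.cons_add] using
      Step.comm (Step.send Γ 0 a) (Step.recv 0 Δ a B)

theorem WeakStep.of_step {s t : State} {α : Label} (hα : α.isNonRecv) (h : Step s α t) :
    WeakStep s α t := by
  cases α with
  | tau => exact Relation.ReflTransGen.single h
  | send a => exact ⟨s, t, .refl, h, .refl⟩
  | recv a => exact hα.elim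

def Weakening (s t : State) : Prop := ∃ E : Ctx, t = s.weaken E

theorem isSimulation_weakening : IsSimulation Weakening := by
  rintro s _ ⟨E, rfl⟩
  refine ⟨fun hΔ => ?_, fun s₁ s₂ hs => ?_, fun α s' hα h => ?_, fun a s' h => ?_⟩
  · exact ⟨s.1 + E, by rw [State.weaken, hΔ]; exact .refl, E, rfl⟩
  · subst hs
    refine ⟨s₁.weaken E, s₂, ?_, ⟨E, rfl⟩, ⟨0, by simp [State.weaken]⟩⟩
    rw [State.weaken_comp]
    exact .refl
  · exact ⟨s'.weaken E, .of_step hα (h.weaken E), E, rfl⟩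
  · exact ⟨s'.weaken E, .single (h.weaken E).tau_of_recv, E, rfl⟩

/-- Weakening for simulation: (Γ;Δ) ≼ₛ ((Γ,Γ');Δ). -/
theorem simPre_weakening (Γ Γ' Δ : Ctx) :
    SimPre (Γ, Δ) (Γ + Γ', Δ) :=
  ⟨Weakening, isSimulation_weakening, Γ', rfl⟩
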